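/- arXiv:1604.07350 — 2 statements merged into one kernel-verified Lean document; each statement's English description precedes it below -/
import Mathlib

section
/- For 1 < α < 2 and every real t, the function x ↦ (e^{itx} − 1 − itx)·x^{−α−1} is Bochner integrable on (0, ∞) and ∫₀^∞ (e^{itx} − 1 − itx) x^{−α−1} dx = −K(α)·|t|^α·(1 − i sign(t) tan(πα/2)), where K(α) = −Γ(−α) cos(πα/2). -/
open MeasureTheory Complex Filter


lemma norm_exp_neg_le_one {w : ℂ} (hw : 0 ≤ w.re) : ‖Complex.exp (-w)‖ ≤ 1 := by
  rw [Complex.norm_exp]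
  rw [Complex.neg_re]; simpa using hw

lemma norm_exp_neg_sub_one_le {w : ℂ} (hw : 0 ≤ w.re) : ‖Complex.exp (-w) - 1‖ ≤ ‖w‖ := by
  have key := Convex.norm_image_sub_le_of_norm_hasDerivWithin_le
    (f := fun s : ℝ => Complex.exp (-(s * w))) (f' := fun s : ℝ => -w * Complex.exp (-(s * w)))
    (C := ‖w‖) (s := Set.Icc (0:ℝ) 1) ?_ ?_ (convex_Icc 0 1)
    (Set.left_mem_Icc.2 zero_le_one) (Set.right_mem_Icc.2 zero_le_one)
  · simpa using key
  · intro s hs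
    have h1 : HasDerivAt (fun s : ℝ => -((s : ℂ) * w)) (-w) s := by
      have : HasDerivAt (fun s : ℝ => ((s : ℝ) : ℂ)) 1 s := Complex.ofRealCLM.hasDerivAt
      exact (this.mul_const w).neg.congr_deriv (by ring)
    simpa [mul_comm] using ((h1.cexp)).hasDerivWithinAt
  · intro s hs
    rw [norm_mul, norm_neg]
    have : ‖Complex.exp (-(s * w))‖ ≤ 1 := by
      apply norm_exp_neg_le_one
      simp only [Complex.mul_re, Complex.ofReal_re, Complex.ofReal_im]
      have := hs.1
      nlinarith [hs.1]
    calc ‖w‖ * ‖Complex.exp (-(↑s * w))‖ ≤ ‖w‖ * 1 := by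
          exact mul_le_mul_of_nonneg_left this (norm_nonneg _)
      _ = ‖w‖ := mul_one _

lemma norm_exp_neg_sub_one_add_le {w : ℂ} (hw : 0 ≤ w.re) :
    ‖Complex.exp (-w) - 1 + w‖ ≤ ‖w‖ ^ 2 := by
  have key := Convex.norm_image_sub_le_of_norm_hasDerivWithin_le
    (f := fun s : ℝ => Complex.exp (-(s * w)) - 1 + s * w)
    (f' := fun s : ℝ => -w * Complex.exp (-(s * w)) + w)
    (C := ‖w‖ ^ 2) (s := Set.Icc (0:ℝ) 1) ?_ ?_ (convex_Icc 0 1)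
    (Set.left_mem_Icc.2 zero_le_one) (Set.right_mem_Icc.2 zero_le_one)
  · simpa using key
  · intro s hs
    have h0 : HasDerivAt (fun s : ℝ => ((s : ℝ) : ℂ)) 1 s := Complex.ofRealCLM.hasDerivAt
    have h1 : HasDerivAt (fun s : ℝ => -((s : ℂ) * w)) (-w) s := by
      exact (h0.mul_const w).neg.congr_deriv (by ring)
    have h2 := h1.cexp
    have h3 := h0.mul_const w
    have := (h2.sub_const 1).add h3
    exact this.hasDerivWithinAt.congr_deriv (by ring)
  · intro s hs
    have heq : -w * Complex.exp (-(s * w)) + w = -(w * (Complex.exp (-(s*w)) - 1)) := by ring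
    rw [heq, norm_neg, norm_mul]
    have hre : 0 ≤ ((s : ℂ) * w).re := by
      simp only [Complex.mul_re, Complex.ofReal_re, Complex.ofReal_im]
      nlinarith [hs.1]
    have h4 : ‖Complex.exp (-(s*w)) - 1‖ ≤ ‖(s : ℂ) * w‖ := norm_exp_neg_sub_one_le hre
    have h5 : ‖(s : ℂ) * w‖ ≤ ‖w‖ := by
      rw [norm_mul]
      have : ‖(s : ℂ)‖ ≤ 1 := by
        rw [Complex.norm_real, Real.norm_eq_abs, _root_.abs_of_nonneg hs.1]; exact hs.2
      nlinarith [norm_nonneg w]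
    calc ‖w‖ * ‖Complex.exp (-(s*w)) - 1‖ ≤ ‖w‖ * ‖w‖ :=
          mul_le_mul_of_nonneg_left (h4.trans h5) (norm_nonneg _)
      _ = ‖w‖ ^ 2 := (sq ‖w‖).symm

lemma norm_exp_neg_sub_one_add_le' {w : ℂ} (hw : 0 ≤ w.re) :
    ‖Complex.exp (-w) - 1 + w‖ ≤ 2 + ‖w‖ := by
  calc ‖Complex.exp (-w) - 1 + w‖ ≤ ‖Complex.exp (-w) - 1‖ + ‖w‖ := norm_add_le _ _
    _ ≤ (‖Complex.exp (-w)‖ + ‖(1:ℂ)‖) + ‖w‖ := by gcongr; exact norm_sub_le _ _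
    _ ≤ (1 + 1) + ‖w‖ := by gcongr; exact norm_exp_neg_le_one hw; simp
    _ = 2 + ‖w‖ := by ring


section
variable {α : ℝ}

lemma contOn (z : ℂ) (hα : 1 < α) :
    ContinuousOn (fun x : ℝ => (Complex.exp (-(z * x)) - 1 + z * x) * ((x ^ (-α - 1) : ℝ) : ℂ))
      (Set.Ioi (0:ℝ)) := by
  apply ContinuousOn.mul
  · apply Continuous.continuousOn
    exact ((((continuous_const.mul Complex.continuous_ofReal).neg).cexp).sub
      continuous_const).add (continuous_const.mul Complex.continuous_ofReal)
  · exact Complex.continuous_ofReal.comp_continuousOn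
      (continuousOn_id.rpow_const (fun x hx => Or.inl (ne_of_gt hx)))

lemma mulre_nonneg {z : ℂ} (hz : 0 ≤ z.re) {x : ℝ} (hx : 0 ≤ x) : 0 ≤ (z * x).re := by
  simp only [Complex.mul_re, Complex.ofReal_re, Complex.ofReal_im]
  nlinarith

lemma integrable_f (hα : 1 < α) (hα2 : α < 2) {z : ℂ} (hz : 0 ≤ z.re) :
    IntegrableOn (fun x : ℝ => (Complex.exp (-(z * x)) - 1 + z * x) * ((x ^ (-α - 1) : ℝ) : ℂ))
      (Set.Ioi (0:ℝ)) := by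
  rw [← Set.Ioc_union_Ioi_eq_Ioi (zero_le_one (α := ℝ))]
  apply MeasureTheory.IntegrableOn.union
  · -- on Ioc 0 1
    have hmeas : AEStronglyMeasurable
        (fun x : ℝ => (Complex.exp (-(z * x)) - 1 + z * x) * ((x ^ (-α - 1) : ℝ) : ℂ))
        (volume.restrict (Set.Ioc (0:ℝ) 1)) :=
      ((contOn z hα).mono Set.Ioc_subset_Ioi_self).aestronglyMeasurable measurableSet_Ioc
    have hint : IntegrableOn (fun x : ℝ => ‖z‖^2 * x ^ (1 - α)) (Set.Ioc (0:ℝ) 1) := by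
      have h := intervalIntegral.intervalIntegrable_rpow' (r := 1 - α) (a := 0) (b := 1)
        (by linarith)
      rw [intervalIntegrable_iff_integrableOn_Ioc_of_le zero_le_one] at h
      exact h.const_mul _
    apply Integrable.mono hint hmeas
    rw [ae_restrict_iff' measurableSet_Ioc]
    filter_upwards with x hx
    have hx0 : (0:ℝ) < x := hx.1
    rw [norm_mul, Complex.norm_real, Real.norm_eq_abs, _root_.abs_of_nonneg (Real.rpow_nonneg hx0.le _)]
    have h1 : ‖Complex.exp (-(z * x)) - 1 + z * x‖ ≤ ‖z * x‖^2 :=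
      norm_exp_neg_sub_one_add_le (mulre_nonneg hz hx0.le)
    have h2 : ‖(z * (x:ℂ))‖^2 = ‖z‖^2 * x^2 := by
      rw [norm_mul, mul_pow, Complex.norm_real, Real.norm_eq_abs, _root_.sq_abs]
    have h3 : x ^ (2:ℝ) * x ^ (-α - 1) = x ^ (1 - α) := by
      rw [← Real.rpow_add hx0]; ring_nf
    calc ‖Complex.exp (-(z * x)) - 1 + z * x‖ * x ^ (-α - 1)
        ≤ ‖z‖^2 * x^2 * x ^ (-α - 1) := by
          rw [← h2]; exact mul_le_mul_of_nonneg_right h1 (Real.rpow_nonneg hx0.le _)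
      _ = ‖z‖^2 * (x ^ (2:ℝ) * x ^ (-α-1)) := by rw [← Real.rpow_natCast x 2]; push_cast; ring
      _ = ‖z‖^2 * x ^ (1 - α) := by rw [h3]
      _ ≤ ‖(fun x : ℝ => ‖z‖^2 * x ^ (1 - α)) x‖ := le_abs_self _
  · -- on Ioi 1
    have hmeas : AEStronglyMeasurable
        (fun x : ℝ => (Complex.exp (-(z * x)) - 1 + z * x) * ((x ^ (-α - 1) : ℝ) : ℂ))
        (volume.restrict (Set.Ioi (1:ℝ))) :=
      ((contOn z hα).mono (Set.Ioi_subset_Ioi zero_le_one)).aestronglyMeasurable measurableSet_Ioi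
    have hint : IntegrableOn (fun x : ℝ => 2 * x ^ (-α - 1) + ‖z‖ * x ^ (-α)) (Set.Ioi (1:ℝ)) := by
      apply Integrable.add
      · exact (integrableOn_Ioi_rpow_of_lt (by linarith) one_pos).const_mul 2
      · exact (integrableOn_Ioi_rpow_of_lt (by linarith) one_pos).const_mul ‖z‖
    apply Integrable.mono hint hmeas
    rw [ae_restrict_iff' measurableSet_Ioi]
    filter_upwards with x hx
    have hx0 : (0:ℝ) < x := lt_trans one_pos hx
    rw [norm_mul, Complex.norm_real, Real.norm_eq_abs, _root_.abs_of_nonneg (Real.rpow_nonneg hx0.le _)]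
    have h1 : ‖Complex.exp (-(z * x)) - 1 + z * x‖ ≤ 2 + ‖z * x‖ :=
      norm_exp_neg_sub_one_add_le' (mulre_nonneg hz hx0.le)
    have h2 : ‖(z * (x:ℂ))‖ = ‖z‖ * x := by
      rw [norm_mul, Complex.norm_real, Real.norm_eq_abs, _root_.abs_of_nonneg hx0.le]
    have h3 : x ^ (1:ℝ) * x ^ (-α - 1) = x ^ (-α) := by
      rw [← Real.rpow_add hx0]; norm_num
    calc ‖Complex.exp (-(z * x)) - 1 + z * x‖ * x ^ (-α - 1)
        ≤ (2 + ‖z‖ * x) * x ^ (-α - 1) := by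
          rw [← h2]; exact mul_le_mul_of_nonneg_right h1 (Real.rpow_nonneg hx0.le _)
      _ = 2 * x ^ (-α-1) + ‖z‖ * (x ^ (1:ℝ) * x ^ (-α-1)) := by
          rw [Real.rpow_one]; ring
      _ = 2 * x ^ (-α-1) + ‖z‖ * x ^ (-α) := by rw [h3]
      _ ≤ ‖(fun x : ℝ => 2 * x ^ (-α - 1) + ‖z‖ * x ^ (-α)) x‖ := le_abs_self _

end


lemma mul_rpow_self {x : ℝ} (hx : 0 < x) (a : ℝ) : x * x ^ a = x ^ (a + 1) := by
  rw [Real.rpow_add_one hx.ne', mul_comm]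

section
variable {α : ℝ}

lemma F_one (hα : 1 < α) (hα2 : α < 2) :
    ∫ x in Set.Ioi (0:ℝ), (Complex.exp (-((1:ℂ) * x)) - 1 + (1:ℂ) * x) * ((x ^ (-α - 1) : ℝ) : ℂ)
      = (Real.Gamma (-α) : ℂ) := by
  have hα0 : (0:ℝ) < α := by linarith
  have hα1 : (0:ℝ) < α - 1 := by linarith
  have hc : (α * (α - 1) : ℝ) ≠ 0 := by positivity
  set W : ℝ → ℂ := fun x =>
    -(Complex.exp (-(x:ℂ)) - 1 + x) * ((x ^ (-α) : ℝ) : ℂ) / α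
      - (1 - Complex.exp (-(x:ℂ))) * ((x ^ (1 - α) : ℝ) : ℂ) / (α * (α - 1)) with hW
  set g : ℝ → ℂ := fun x =>
    (Complex.exp (-(x:ℂ)) - 1 + x) * ((x ^ (-α - 1) : ℝ) : ℂ)
      - Complex.exp (-(x:ℂ)) * ((x ^ (1 - α) : ℝ) : ℂ) / (α * (α - 1)) with hg
  -- second part integrable
  have hint2 : IntegrableOn (fun x : ℝ => Complex.exp (-(x:ℂ)) * ((x ^ (1 - α) : ℝ) : ℂ))
      (Set.Ioi (0:ℝ)) := by
    have h := Real.GammaIntegral_convergent (s := 2 - α) (by linarith)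
    have h2 : IntegrableOn (fun x : ℝ => ((Real.exp (-x) * x ^ (2 - α - 1) : ℝ) : ℂ))
        (Set.Ioi (0:ℝ)) := h.ofReal
    apply h2.congr_fun _ measurableSet_Ioi
    intro x hx
    rw [show (2:ℝ) - α - 1 = 1 - α by ring]
    push_cast
    ring
  have hint1 := integrable_f hα hα2 (z := 1) (by norm_num)
  have hgint : IntegrableOn g (Set.Ioi (0:ℝ)) := by
    apply Integrable.sub
    · apply hint1.congr_fun _ measurableSet_Ioi
      intro x hx; simp
    · exact (hint2.div_const _)
  -- derivative
  have hderiv : ∀ x ∈ Set.Ioi (0:ℝ), HasDerivAt W (g x) x := by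
    intro x hx
    have hx0 : (0:ℝ) < x := hx
    have hE : HasDerivAt (fun y : ℝ => Complex.exp (-(y:ℂ)) - 1 + (y:ℂ))
        (-Complex.exp (-(x:ℂ)) + 1) x := by
      have h0 : HasDerivAt (fun y : ℝ => ((y : ℝ) : ℂ)) 1 x := Complex.ofRealCLM.hasDerivAt
      have h1 : HasDerivAt (fun y : ℝ => -((y:ℝ) : ℂ)) (-1) x := h0.neg
      have h2 := h1.cexp
      exact ((h2.sub_const 1).add h0).congr_deriv (by ring)
    have hR1 : HasDerivAt (fun y : ℝ => ((y ^ (-α) : ℝ) : ℂ)) ((-α * x ^ (-α - 1) : ℝ) : ℂ) x := by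
      exact (Real.hasDerivAt_rpow_const (p := -α) (Or.inl hx0.ne')).ofReal_comp
    have hR2 : HasDerivAt (fun y : ℝ => ((y ^ (1 - α) : ℝ) : ℂ))
        (((1 - α) * x ^ (1 - α - 1) : ℝ) : ℂ) x := by
      exact (Real.hasDerivAt_rpow_const (p := 1 - α) (Or.inl hx0.ne')).ofReal_comp
    have hD : HasDerivAt W
        ((-(-Complex.exp (-(x:ℂ)) + 1) * ((x ^ (-α) : ℝ) : ℂ)
            + -(Complex.exp (-(x:ℂ)) - 1 + x) * ((-α * x ^ (-α - 1) : ℝ) : ℂ)) / α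
          - ((Complex.exp (-(x:ℂ))) * ((x ^ (1 - α) : ℝ) : ℂ)
            + (1 - Complex.exp (-(x:ℂ))) * (((1 - α) * x ^ (1 - α - 1) : ℝ) : ℂ)) / (α * (α - 1)))
        x := by
      apply HasDerivAt.sub
      · exact ((hE.neg.mul hR1)).div_const _
      · have hE2 : HasDerivAt (fun y : ℝ => 1 - Complex.exp (-(y:ℂ)))
            (Complex.exp (-(x:ℂ))) x := by
          have h0 : HasDerivAt (fun y : ℝ => ((y : ℝ) : ℂ)) 1 x := Complex.ofRealCLM.hasDerivAt
          have h2 := (h0.neg).cexp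
          exact (h2.const_sub 1).congr_deriv (by simp)
        exact (hE2.mul hR2).div_const _
    convert hD using 1
    have hA : x ^ (-α) = x ^ (-α - 1) * x := by
      rw [← Real.rpow_add_one hx0.ne']; ring_nf
    have hB : x ^ (1 - α) = x ^ (-α) * x := by
      rw [← Real.rpow_add_one hx0.ne']; ring_nf
    have hB' : x ^ (1 - α - 1) = x ^ (-α) := by ring_nf
    rw [hg]
    simp only
    rw [hB', hA, hB]
    push_cast
    have hxne : (x : ℂ) ≠ 0 := by exact_mod_cast hx0.ne'
    have hαne : (α : ℂ) ≠ 0 := by exact_mod_cast hα0.ne'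
    have hα1ne : ((α : ℂ) - 1) ≠ 0 := by
      intro h
      have h2 : (α:ℂ) = 1 := sub_eq_zero.mp h
      have h3 : α = 1 := by exact_mod_cast h2
      linarith
    field_simp
    ring
  -- continuity at 0
  have hW0 : W 0 = 0 := by
    rw [hW]; simp
  have hcont : ContinuousWithinAt W (Set.Ici (0:ℝ)) 0 := by
    rw [ContinuousWithinAt, hW0]
    have hbound : ∀ x ∈ Set.Ici (0:ℝ),
        ‖W x‖ ≤ x ^ (2 - α) * (1/α + 1/(α * (α-1))) := by
      intro x hx
      rcases eq_or_lt_of_le (Set.mem_Ici.mp hx) with h | hx0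
      · rw [← h, hW0, Real.zero_rpow (by intro h2; linarith [h2] : (2:ℝ) - α ≠ 0)]
        simp
      · have hxre : (0:ℝ) ≤ ((x:ℂ)).re := by simpa using hx0.le
        have h1 : ‖-(Complex.exp (-(x:ℂ)) - 1 + x) * ((x ^ (-α) : ℝ) : ℂ) / α‖
            ≤ x ^ (2 - α) / α := by
          rw [norm_div, norm_mul, norm_neg]
          have hE : ‖Complex.exp (-(x:ℂ)) - 1 + (x:ℂ)‖ ≤ x^2 := by
            have := norm_exp_neg_sub_one_add_le (w := (x:ℂ)) hxre
            rwa [Complex.norm_real, Real.norm_eq_abs, _root_.abs_of_nonneg hx0.le] at this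
          rw [Complex.norm_real, Real.norm_eq_abs, _root_.abs_of_nonneg (Real.rpow_nonneg hx0.le _),
            Complex.norm_real, Real.norm_eq_abs, _root_.abs_of_nonneg hα0.le]
          apply div_le_div_of_nonneg_right ?_ hα0.le |>.trans_eq rfl
          calc ‖Complex.exp (-(x:ℂ)) - 1 + (x:ℂ)‖ * x ^ (-α) ≤ x^2 * x ^ (-α) :=
                mul_le_mul_of_nonneg_right hE (Real.rpow_nonneg hx0.le _)
            _ = x ^ (2 - α) := by
                rw [← Real.rpow_natCast x 2, ← Real.rpow_add hx0]
                norm_num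
                ring_nf
        have h2 : ‖(1 - Complex.exp (-(x:ℂ))) * ((x ^ (1 - α) : ℝ) : ℂ) / (α * (α - 1))‖
            ≤ x ^ (2 - α) / (α * (α - 1)) := by
          rw [norm_div, norm_mul]
          have hE : ‖1 - Complex.exp (-(x:ℂ))‖ ≤ x := by
            rw [← norm_neg, neg_sub]
            have := norm_exp_neg_sub_one_le (w := (x:ℂ)) hxre
            rwa [Complex.norm_real, Real.norm_eq_abs, _root_.abs_of_nonneg hx0.le] at this
          rw [Complex.norm_real, Real.norm_eq_abs, _root_.abs_of_nonneg (Real.rpow_nonneg hx0.le _)]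
          have hcnorm : ‖((α:ℂ) * ((α:ℂ) - 1))‖ = α * (α - 1) := by
            have : ((α:ℂ) * ((α:ℂ) - 1)) = ((α * (α-1) : ℝ) : ℂ) := by push_cast; ring
            rw [this, Complex.norm_real, Real.norm_eq_abs, _root_.abs_of_nonneg (by positivity)]
          rw [hcnorm]
          apply div_le_div_of_nonneg_right ?_ (by positivity : (0:ℝ) ≤ α * (α-1)) |>.trans_eq rfl
          calc ‖1 - Complex.exp (-(x:ℂ))‖ * x ^ (1 - α) ≤ x * x ^ (1 - α) :=
                mul_le_mul_of_nonneg_right hE (Real.rpow_nonneg hx0.le _)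
            _ = x ^ (2 - α) := by
                rw [mul_rpow_self hx0, show (1:ℝ) - α + 1 = 2 - α by ring]
        calc ‖W x‖ ≤ ‖-(Complex.exp (-(x:ℂ)) - 1 + x) * ((x ^ (-α) : ℝ) : ℂ) / α‖
              + ‖(1 - Complex.exp (-(x:ℂ))) * ((x ^ (1 - α) : ℝ) : ℂ) / (α * (α - 1))‖ :=
              norm_sub_le _ _
          _ ≤ x ^ (2 - α) / α + x ^ (2 - α) / (α * (α - 1)) := add_le_add h1 h2
          _ = x ^ (2 - α) * (1/α + 1/(α * (α-1))) := by ring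
    refine squeeze_zero_norm'
      (a := fun x => x ^ (2 - α) * (1/α + 1/(α * (α-1))))
      (eventually_nhdsWithin_of_forall hbound) ?_
    · have hcont2 : Tendsto (fun x : ℝ => x ^ (2 - α)) (nhds 0) (nhds 0) := by
        have := (Real.continuousAt_rpow_const 0 (2 - α) (Or.inr (by linarith)))
        have h0 : (0:ℝ) ^ (2 - α) = 0 := Real.zero_rpow (by intro h2; linarith [h2])
        simpa [ContinuousAt, h0] using this
      have := (hcont2.mono_left (nhdsWithin_le_nhds (s := Set.Ici (0:ℝ)))).mul_const
        (1/α + 1/(α * (α-1)))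
      simpa using this
  -- limit at infinity
  have hlim : Tendsto W atTop (nhds (0:ℂ)) := by
    have hbound : ∀ x ∈ Set.Ioi (0:ℝ),
        ‖W x‖ ≤ (2 + x) * x ^ (-α) / α + 2 * x ^ (-(α - 1)) / (α * (α - 1)) := by
      intro x hx0
      have hx0 : (0:ℝ) < x := hx0
      have hxre : (0:ℝ) ≤ ((x:ℂ)).re := by simpa using hx0.le
      have h1 : ‖-(Complex.exp (-(x:ℂ)) - 1 + x) * ((x ^ (-α) : ℝ) : ℂ) / α‖
          ≤ (2 + x) * x ^ (-α) / α := by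
        rw [norm_div, norm_mul, norm_neg]
        have hE : ‖Complex.exp (-(x:ℂ)) - 1 + (x:ℂ)‖ ≤ 2 + x := by
          have := norm_exp_neg_sub_one_add_le' (w := (x:ℂ)) hxre
          rwa [Complex.norm_real, Real.norm_eq_abs, _root_.abs_of_nonneg hx0.le] at this
        rw [Complex.norm_real, Real.norm_eq_abs, _root_.abs_of_nonneg (Real.rpow_nonneg hx0.le _),
          Complex.norm_real, Real.norm_eq_abs, _root_.abs_of_nonneg hα0.le]
        exact div_le_div_of_nonneg_right
          (mul_le_mul_of_nonneg_right hE (Real.rpow_nonneg hx0.le _)) hα0.le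
      have h2 : ‖(1 - Complex.exp (-(x:ℂ))) * ((x ^ (1 - α) : ℝ) : ℂ) / (α * (α - 1))‖
          ≤ 2 * x ^ (-(α - 1)) / (α * (α - 1)) := by
        rw [norm_div, norm_mul]
        have hE : ‖1 - Complex.exp (-(x:ℂ))‖ ≤ 2 := by
          calc ‖1 - Complex.exp (-(x:ℂ))‖ ≤ ‖(1:ℂ)‖ + ‖Complex.exp (-(x:ℂ))‖ := norm_sub_le _ _
            _ ≤ 1 + 1 := by gcongr; simp; exact norm_exp_neg_le_one hxre
            _ = 2 := by norm_num
        rw [Complex.norm_real, Real.norm_eq_abs, _root_.abs_of_nonneg (Real.rpow_nonneg hx0.le _)]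
        have hcnorm : ‖((α:ℂ) * ((α:ℂ) - 1))‖ = α * (α - 1) := by
          have : ((α:ℂ) * ((α:ℂ) - 1)) = ((α * (α-1) : ℝ) : ℂ) := by push_cast; ring
          rw [this, Complex.norm_real, Real.norm_eq_abs, _root_.abs_of_nonneg (by positivity)]
        rw [hcnorm, show (1:ℝ) - α = -(α - 1) by ring]
        exact div_le_div_of_nonneg_right
          (mul_le_mul_of_nonneg_right hE (Real.rpow_nonneg hx0.le _)) (by positivity : (0:ℝ) ≤ α * (α-1))
      calc ‖W x‖ ≤ ‖-(Complex.exp (-(x:ℂ)) - 1 + x) * ((x ^ (-α) : ℝ) : ℂ) / α‖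
            + ‖(1 - Complex.exp (-(x:ℂ))) * ((x ^ (1 - α) : ℝ) : ℂ) / (α * (α - 1))‖ :=
            norm_sub_le _ _
        _ ≤ (2 + x) * x ^ (-α) / α + 2 * x ^ (-(α - 1)) / (α * (α - 1)) := add_le_add h1 h2
    refine squeeze_zero_norm'
      (a := fun x => (2 + x) * x ^ (-α) / α + 2 * x ^ (-(α - 1)) / (α * (α - 1)))
      ?_ ?_
    · filter_upwards [eventually_gt_atTop (0:ℝ)] with x hx using hbound x hx
    · have t1 : Tendsto (fun x : ℝ => x ^ (-α)) atTop (nhds 0) :=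
        tendsto_rpow_neg_atTop hα0
      have t2 : Tendsto (fun x : ℝ => x ^ (-(α-1))) atTop (nhds 0) :=
        tendsto_rpow_neg_atTop hα1
      have t3 : Tendsto (fun x : ℝ => x * x ^ (-α)) atTop (nhds 0) := by
        have heven : ∀ᶠ x : ℝ in atTop, x ^ (-(α-1)) = x * x ^ (-α) := by
          filter_upwards [eventually_gt_atTop (0:ℝ)] with x hx
          rw [mul_rpow_self hx]; ring_nf
        exact Tendsto.congr' heven t2
      have : Tendsto (fun x : ℝ => (2 + x) * x ^ (-α) / α + 2 * x ^ (-(α - 1)) / (α * (α - 1)))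
          atTop (nhds ((2 * 0 + 0) / α + 2 * 0 / (α * (α - 1)))) := by
        apply Tendsto.add
        · apply Tendsto.div_const
          have := (t1.const_mul 2).add t3
          apply this.congr
          intro x; ring
        · exact ((t2.const_mul 2).div_const _)
      simpa using this
  -- apply FTC
  have key := integral_Ioi_of_hasDerivAt_of_tendsto hcont hderiv hgint hlim
  rw [hW0, sub_zero] at key
  have hsplit : ∫ x in Set.Ioi (0:ℝ), g x
      = (∫ x in Set.Ioi (0:ℝ), (Complex.exp (-(x:ℂ)) - 1 + x) * ((x ^ (-α - 1) : ℝ) : ℂ))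
        - (∫ x in Set.Ioi (0:ℝ), Complex.exp (-(x:ℂ)) * ((x ^ (1 - α) : ℝ) : ℂ)) / (α * (α-1)) := by
    rw [hg, ← integral_div]
    apply integral_sub
    · apply hint1.congr_fun _ measurableSet_Ioi
      intro x hx; simp
    · exact hint2.div_const _
  have hGamma2 : ∫ x in Set.Ioi (0:ℝ), Complex.exp (-(x:ℂ)) * ((x ^ (1 - α) : ℝ) : ℂ)
      = (Real.Gamma (2 - α) : ℂ) := by
    rw [Real.Gamma_eq_integral (by linarith : (0:ℝ) < 2 - α)]
    have hcast : ∫ x in Set.Ioi (0:ℝ), ((Real.exp (-x) * x ^ (2 - α - 1) : ℝ) : ℂ)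
        = ((∫ x in Set.Ioi (0:ℝ), Real.exp (-x) * x ^ (2 - α - 1) : ℝ) : ℂ) := integral_ofReal
    rw [← hcast]
    apply setIntegral_congr_fun measurableSet_Ioi
    intro x hx
    rw [show (2:ℝ) - α - 1 = 1 - α by ring]
    push_cast
    ring
  have hGrec : Real.Gamma (2 - α) = α * (α - 1) * Real.Gamma (-α) := by
    have e1 : (2:ℝ) - α = (1 - α) + 1 := by ring
    have e2 : (1:ℝ) - α = (-α) + 1 := by ring
    rw [e1, Real.Gamma_add_one (by intro h; linarith [h] : (1:ℝ) - α ≠ 0), e2,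
      Real.Gamma_add_one (by intro h; linarith [neg_eq_zero.mp h] : (-α:ℝ) ≠ 0)]
    ring
  have hfinal : ∫ x in Set.Ioi (0:ℝ), (Complex.exp (-(x:ℂ)) - 1 + x) * ((x ^ (-α - 1) : ℝ) : ℂ)
      = (Real.Gamma (-α) : ℂ) := by
    have := hsplit.symm.trans key
    have h2 : (∫ x in Set.Ioi (0:ℝ), (Complex.exp (-(x:ℂ)) - 1 + x) * ((x ^ (-α - 1) : ℝ) : ℂ))
        = (∫ x in Set.Ioi (0:ℝ), Complex.exp (-(x:ℂ)) * ((x ^ (1 - α) : ℝ) : ℂ)) / (α * (α-1)) := by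
      linear_combination this
    rw [h2, hGamma2, hGrec]
    push_cast
    have hcc : ((α:ℂ) * ((α:ℂ) - 1)) ≠ 0 := by
      intro h
      have : (α * (α - 1) : ℝ) = 0 := by exact_mod_cast (by push_cast at h ⊢; exact h : ((α * (α-1) : ℝ) : ℂ) = 0)
      exact hc this
    exact mul_div_cancel_left₀ _ hcc
  rw [← hfinal]
  apply setIntegral_congr_fun measurableSet_Ioi
  intro x hx
  simp

end


section
variable {α : ℝ}

lemma F_real (hα : 1 < α) (hα2 : α < 2) {r : ℝ} (hr : 0 < r) :
    ∫ x in Set.Ioi (0:ℝ),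
        (Complex.exp (-((r:ℂ) * x)) - 1 + (r:ℂ) * x) * ((x ^ (-α - 1) : ℝ) : ℂ)
      = ((r ^ α * Real.Gamma (-α) : ℝ) : ℂ) := by
  set h : ℝ → ℂ := fun u => (Complex.exp (-((1:ℂ) * u)) - 1 + (1:ℂ) * u) * ((u ^ (-α - 1) : ℝ) : ℂ)
    with hh
  have key : ∀ x ∈ Set.Ioi (0:ℝ),
      (Complex.exp (-((r:ℂ) * x)) - 1 + (r:ℂ) * x) * ((x ^ (-α - 1) : ℝ) : ℂ)
        = ((r ^ (α + 1) : ℝ) : ℂ) * h (r * x) := by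
    intro x hx
    have hx0 : (0:ℝ) < x := hx
    have hreal : x ^ (-α - 1) = r ^ (α+1) * ((r*x) ^ (-α-1)) := by
      rw [Real.mul_rpow hr.le hx0.le, ← mul_assoc, ← Real.rpow_add hr]
      norm_num
    rw [hh]
    simp only [one_mul]
    rw [hreal]
    push_cast
    ring
  rw [setIntegral_congr_fun measurableSet_Ioi key, integral_const_mul,
    integral_comp_mul_left_Ioi h 0 hr, mul_zero]
  rw [hh]
  rw [F_one hα hα2]
  have hsmul : (r⁻¹ : ℝ) • (Real.Gamma (-α) : ℂ) = ((r⁻¹ * Real.Gamma (-α) : ℝ) : ℂ) := by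
    rw [real_smul]
    push_cast
    ring
  rw [hsmul]
  have hr2 : r ^ (α+1) * (r⁻¹ * Real.Gamma (-α)) = r ^ α * Real.Gamma (-α) := by
    rw [Real.rpow_add hr, Real.rpow_one]
    field_simp
  push_cast [← hr2]
  ring

lemma isOpenS : IsOpen {z : ℂ | 0 < z.re} := isOpen_lt continuous_const Complex.continuous_re

lemma F_diff (hα : 1 < α) (hα2 : α < 2) :
    DifferentiableOn ℂ
      (fun z : ℂ => ∫ x in Set.Ioi (0:ℝ),
        (Complex.exp (-(z * x)) - 1 + z * x) * ((x ^ (-α - 1) : ℝ) : ℂ))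
      {z : ℂ | 0 < z.re} := by
  intro z₀ hz₀
  have hz₀re : (0:ℝ) < z₀.re := hz₀
  set ε : ℝ := z₀.re / 2 with hε
  have hεpos : 0 < ε := by positivity
  set M : ℝ := ‖z₀‖ + ε with hM
  have hMpos : 0 < M := by positivity
  have hball : ∀ z ∈ Metric.ball z₀ ε, 0 ≤ z.re ∧ ‖z‖ ≤ M := by
    intro z hz
    rw [Metric.mem_ball] at hz
    constructor
    · have h1 : |(z - z₀).re| ≤ ‖z - z₀‖ := Complex.abs_re_le_norm _
      have h2 : ‖z - z₀‖ < ε := by rwa [dist_eq_norm] at hz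
      have h3 := (abs_lt.mp (lt_of_le_of_lt h1 h2)).1
      simp only [Complex.sub_re] at h3
      simp only [hε] at h3 ⊢
      linarith
    · have h1 : ‖z‖ ≤ ‖z₀‖ + ‖z - z₀‖ := by
        calc ‖z‖ = ‖z₀ + (z - z₀)‖ := by ring_nf
          _ ≤ ‖z₀‖ + ‖z - z₀‖ := norm_add_le _ _
      have h2 : ‖z - z₀‖ < ε := by rwa [dist_eq_norm] at hz
      rw [hM]; linarith
  set bound : ℝ → ℝ := fun x => if x ≤ 1 then M * x ^ (1 - α) else 2 * x ^ (-α) with hbd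
  have key := hasDerivAt_integral_of_dominated_loc_of_deriv_le
    (F := fun z (x : ℝ) => (Complex.exp (-(z * x)) - 1 + z * x) * ((x ^ (-α - 1) : ℝ) : ℂ))
    (F' := fun z (x : ℝ) => (-(x:ℂ) * Complex.exp (-(z * x)) + x) * ((x ^ (-α - 1) : ℝ) : ℂ))
    (x₀ := z₀) (s := Metric.ball z₀ ε) (μ := volume.restrict (Set.Ioi (0:ℝ)))
    (bound := bound) (Metric.ball_mem_nhds z₀ hεpos) ?_ ?_ ?_ ?_ ?_ ?_
  · exact key.2.differentiableAt.differentiableWithinAt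
  · filter_upwards with z
    exact ((contOn z hα).aestronglyMeasurable measurableSet_Ioi)
  · exact integrable_f hα hα2 hz₀re.le
  · apply ContinuousOn.aestronglyMeasurable _ measurableSet_Ioi
    apply ContinuousOn.mul
    · apply Continuous.continuousOn
      continuity
    · exact Complex.continuous_ofReal.comp_continuousOn
        (continuousOn_id.rpow_const (fun x hx => Or.inl (ne_of_gt hx)))
  · rw [ae_restrict_iff' measurableSet_Ioi]
    filter_upwards with x hx
    intro z hz
    have hx0 : (0:ℝ) < x := hx
    obtain ⟨hzre, hzM⟩ := hball z hz
    have heq : (-(x:ℂ) * Complex.exp (-(z * x)) + x) = (x:ℂ) * (1 - Complex.exp (-(z * x))) := by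
      ring
    rw [heq, norm_mul, norm_mul, Complex.norm_real, Real.norm_eq_abs,
      _root_.abs_of_nonneg hx0.le, Complex.norm_real, Real.norm_eq_abs,
      _root_.abs_of_nonneg (Real.rpow_nonneg hx0.le _)]
    have hle1 : ‖1 - Complex.exp (-(z * x))‖ ≤ ‖z‖ * x := by
      rw [← norm_neg, neg_sub]
      have h4 := norm_exp_neg_sub_one_le (w := z * x) (mulre_nonneg hzre hx0.le)
      rwa [norm_mul, Complex.norm_real, Real.norm_eq_abs, _root_.abs_of_nonneg hx0.le] at h4
    have hle2 : ‖1 - Complex.exp (-(z * x))‖ ≤ 2 := by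
      calc ‖1 - Complex.exp (-(z * x))‖ ≤ ‖(1:ℂ)‖ + ‖Complex.exp (-(z * x))‖ := norm_sub_le _ _
        _ ≤ 1 + 1 := by
            gcongr
            · simp
            · rw [Complex.norm_exp]
              apply Real.exp_le_one_iff.2
              rw [Complex.neg_re]
              simpa using mulre_nonneg hzre hx0.le
        _ = 2 := by norm_num
    rw [hbd]
    by_cases hx1 : x ≤ 1
    · simp only [if_pos hx1]
      calc x * ‖1 - Complex.exp (-(z * x))‖ * x ^ (-α - 1)
          ≤ x * (‖z‖ * x) * x ^ (-α - 1) := by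
            apply mul_le_mul_of_nonneg_right _ (Real.rpow_nonneg hx0.le _)
            exact mul_le_mul_of_nonneg_left hle1 hx0.le
        _ ≤ x * (M * x) * x ^ (-α - 1) := by
            apply mul_le_mul_of_nonneg_right _ (Real.rpow_nonneg hx0.le _)
            apply mul_le_mul_of_nonneg_left _ hx0.le
            exact mul_le_mul_of_nonneg_right hzM hx0.le
        _ = M * (x * (x * x ^ (-α - 1))) := by ring
        _ = M * x ^ (1 - α) := by
            rw [mul_rpow_self hx0, mul_rpow_self hx0, show -α - 1 + 1 + 1 = 1 - α by ring]
    · simp only [if_neg hx1]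
      push_neg at hx1
      calc x * ‖1 - Complex.exp (-(z * x))‖ * x ^ (-α - 1)
          ≤ x * 2 * x ^ (-α - 1) := by
            apply mul_le_mul_of_nonneg_right _ (Real.rpow_nonneg hx0.le _)
            exact mul_le_mul_of_nonneg_left hle2 hx0.le
        _ = 2 * (x * x ^ (-α - 1)) := by ring
        _ = 2 * x ^ (-α) := by rw [mul_rpow_self hx0, show -α - 1 + 1 = -α by ring]
  · have h1 : IntegrableOn bound (Set.Ioc (0:ℝ) 1) := by
      apply IntegrableOn.congr_fun (f := fun x => M * x ^ (1 - α))
      · have h := intervalIntegral.intervalIntegrable_rpow' (r := 1 - α) (a := 0) (b := 1)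
          (by linarith)
        rw [intervalIntegrable_iff_integrableOn_Ioc_of_le zero_le_one] at h
        exact h.const_mul _
      · intro x hx
        rw [hbd]
        simp only
        rw [if_pos hx.2]
      · exact measurableSet_Ioc
    have h2 : IntegrableOn bound (Set.Ioi (1:ℝ)) := by
      apply IntegrableOn.congr_fun (f := fun x => 2 * x ^ (-α))
      · exact (integrableOn_Ioi_rpow_of_lt (by linarith) one_pos).const_mul 2
      · intro x hx
        rw [hbd]
        simp only
        rw [if_neg (not_le.mpr hx)]
      · exact measurableSet_Ioi
    have h3 := h1.union h2
    rw [Set.Ioc_union_Ioi_eq_Ioi zero_le_one] at h3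
    exact h3
  · rw [ae_restrict_iff' measurableSet_Ioi]
    filter_upwards with x hx
    intro z hz
    have hd1 : HasDerivAt (fun z : ℂ => -(z * x)) (-(x:ℂ)) z := by
      exact ((hasDerivAt_id z).mul_const (x:ℂ)).neg.congr_deriv (by simp)
    have hd2 := hd1.cexp
    have hd3 : HasDerivAt (fun z : ℂ => z * (x:ℂ)) (x:ℂ) z := by
      simpa using (hasDerivAt_id z).mul_const (x:ℂ)
    have h5 := ((hd2.sub_const 1).add hd3).mul_const ((x ^ (-α - 1) : ℝ) : ℂ)
    exact h5.congr_deriv (by ring)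

lemma F_eq (hα : 1 < α) (hα2 : α < 2) {z : ℂ} (hz : 0 < z.re) :
    ∫ x in Set.Ioi (0:ℝ), (Complex.exp (-(z * x)) - 1 + z * x) * ((x ^ (-α - 1) : ℝ) : ℂ)
      = (Real.Gamma (-α) : ℂ) * z ^ (α : ℂ) := by
  set S : Set ℂ := {z : ℂ | 0 < z.re} with hS
  have hFa : AnalyticOnNhd ℂ
      (fun z : ℂ => ∫ x in Set.Ioi (0:ℝ),
        (Complex.exp (-(z * x)) - 1 + z * x) * ((x ^ (-α - 1) : ℝ) : ℂ)) S :=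
    (F_diff hα hα2).analyticOnNhd isOpenS
  have hGa : AnalyticOnNhd ℂ (fun z : ℂ => (Real.Gamma (-α) : ℂ) * z ^ (α : ℂ)) S := by
    apply DifferentiableOn.analyticOnNhd _ isOpenS
    intro w hw
    apply DifferentiableWithinAt.const_mul
    apply DifferentiableAt.differentiableWithinAt
    exact ((hasDerivAt_id w).cpow_const (Or.inl hw)).differentiableAt
  have hpre : IsPreconnected S := (convex_halfSpace_re_gt 0).isPreconnected
  have h1S : (1:ℂ) ∈ S := by simp [hS]
  have hfreq : ∃ᶠ w in nhdsWithin (1:ℂ) {(1:ℂ)}ᶜ,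
      (fun z : ℂ => ∫ x in Set.Ioi (0:ℝ),
        (Complex.exp (-(z * x)) - 1 + z * x) * ((x ^ (-α - 1) : ℝ) : ℂ)) w
      = (fun z : ℂ => (Real.Gamma (-α) : ℂ) * z ^ (α : ℂ)) w := by
    have htend : Tendsto (fun n : ℕ => ((1 + ((n:ℝ)+1)⁻¹ : ℝ) : ℂ)) atTop
        (nhdsWithin (1:ℂ) {(1:ℂ)}ᶜ) := by
      apply tendsto_nhdsWithin_of_tendsto_nhds_of_eventually_within
      · have ht : Tendsto (fun n : ℕ => (1 + ((n:ℝ)+1)⁻¹ : ℝ)) atTop (nhds 1) := by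
          have h0 := tendsto_one_div_add_atTop_nhds_zero_nat (𝕜 := ℝ)
          have h2 := h0.const_add 1
          simpa [one_div] using h2
        have h3 := (Complex.continuous_ofReal.tendsto 1).comp ht
        exact h3
      · filter_upwards with n
        simp only [Set.mem_compl_iff, Set.mem_singleton_iff]
        intro h
        have h2 : (1 + ((n:ℝ)+1)⁻¹ : ℝ) = 1 := by exact_mod_cast h
        have hpos : (0:ℝ) < ((n:ℝ)+1)⁻¹ := by positivity
        linarith
    apply htend.frequently
    apply Filter.Eventually.frequently
    filter_upwards with n
    have hrpos : (0:ℝ) < 1 + ((n:ℝ)+1)⁻¹ := by positivity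
    show (∫ x in Set.Ioi (0:ℝ), _) = _
    rw [F_real hα hα2 hrpos]
    rw [← Complex.ofReal_cpow hrpos.le]
    push_cast
    ring
  have hEq := hFa.eqOn_of_preconnected_of_frequently_eq hGa hpre h1S hfreq
  exact hEq hz

end


section
variable {α : ℝ}

lemma F_boundary (hα : 1 < α) (hα2 : α < 2) {t : ℝ} (ht : t ≠ 0) :
    ∫ x in Set.Ioi (0:ℝ),
        (Complex.exp (-(-(Complex.I * t) * x)) - 1 + -(Complex.I * t) * x)
          * ((x ^ (-α - 1) : ℝ) : ℂ)
      = (Real.Gamma (-α) : ℂ) * (-(Complex.I * t)) ^ (α : ℂ) := by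
  set w : ℂ := -(Complex.I * t) with hw
  have hwre : w.re = 0 := by simp [hw]
  have hwim : w.im = -t := by simp [hw]
  have hwnorm : ‖w‖ = |t| := by
    rw [hw, norm_neg, norm_mul, Complex.norm_I, Complex.norm_real, Real.norm_eq_abs, one_mul]
  set zs : ℕ → ℂ := fun n => (((n:ℝ)+1)⁻¹ : ℝ) + w with hzs
  have hzsre : ∀ n, 0 < (zs n).re := by
    intro n
    rw [hzs]
    simp only [Complex.add_re, Complex.ofReal_re, hwre, add_zero]
    positivity
  have hzsnorm : ∀ n, ‖zs n‖ ≤ 1 + |t| := by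
    intro n
    have heq : zs n = ((((n:ℝ)+1)⁻¹ : ℝ) : ℂ) + w := rfl
    rw [heq]
    refine (norm_add_le _ _).trans ?_
    rw [hwnorm, Complex.norm_real, Real.norm_eq_abs, _root_.abs_of_nonneg (by positivity)]
    have h9 : ((n:ℝ)+1)⁻¹ ≤ 1 := by
      rw [inv_le_one₀ (by positivity)]
      linarith [Nat.cast_nonneg (α := ℝ) n]
    linarith
  set M : ℝ := 1 + |t| with hM
  have hMpos : 0 < M := by positivity
  set bound : ℝ → ℝ := fun x => if x ≤ 1 then M^2 * x ^ (1 - α) else 2 * x ^ (-α-1) + M * x ^ (-α)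
    with hbd
  have htendzs : Tendsto zs atTop (nhds w) := by
    have h0 : Tendsto (fun n : ℕ => (((n:ℝ)+1)⁻¹ : ℝ)) atTop (nhds 0) := by
      have := tendsto_one_div_add_atTop_nhds_zero_nat (𝕜 := ℝ)
      simpa [one_div] using this
    have h1 : Tendsto (fun n : ℕ => ((((n:ℝ)+1)⁻¹ : ℝ) : ℂ)) atTop (nhds ((0:ℝ):ℂ)) :=
      (Complex.continuous_ofReal.tendsto 0).comp h0
    have h2 := h1.add_const w
    have h3 : ((0:ℝ):ℂ) + w = w := by simp
    rw [← h3]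
    exact h2
  have key := MeasureTheory.tendsto_integral_of_dominated_convergence
    (F := fun n (x : ℝ) => (Complex.exp (-(zs n * x)) - 1 + zs n * x) * ((x ^ (-α - 1) : ℝ) : ℂ))
    (f := fun x : ℝ => (Complex.exp (-(w * x)) - 1 + w * x) * ((x ^ (-α - 1) : ℝ) : ℂ))
    (μ := volume.restrict (Set.Ioi (0:ℝ))) (bound := bound)
    (fun n => (contOn (zs n) hα).aestronglyMeasurable measurableSet_Ioi) ?_ ?_ ?_
  · -- combine with F_eq
    have hvals : ∀ n, (∫ x in Set.Ioi (0:ℝ),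
        (Complex.exp (-(zs n * x)) - 1 + zs n * x) * ((x ^ (-α - 1) : ℝ) : ℂ))
        = (Real.Gamma (-α) : ℂ) * (zs n) ^ (α : ℂ) := fun n => F_eq hα hα2 (hzsre n)
    have key2 : Tendsto (fun n => (Real.Gamma (-α) : ℂ) * (zs n) ^ (α : ℂ)) atTop
        (nhds (∫ x in Set.Ioi (0:ℝ),
          (Complex.exp (-(w * x)) - 1 + w * x) * ((x ^ (-α - 1) : ℝ) : ℂ))) := by
      apply key.congr
      intro n
      exact (hvals n)
    have key3 : Tendsto (fun n => (Real.Gamma (-α) : ℂ) * (zs n) ^ (α : ℂ)) atTop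
        (nhds ((Real.Gamma (-α) : ℂ) * w ^ (α : ℂ))) := by
      apply Tendsto.const_mul
      have hcont : ContinuousAt (fun z : ℂ => z ^ (α : ℂ)) w := by
        apply continuousAt_cpow_const
        rw [Complex.mem_slitPlane_iff]
        right
        rw [hwim]
        simpa using ht
      exact hcont.tendsto.comp htendzs
    exact tendsto_nhds_unique key2 key3
  · -- bound integrable
    have h1 : IntegrableOn bound (Set.Ioc (0:ℝ) 1) := by
      apply IntegrableOn.congr_fun (f := fun x => M^2 * x ^ (1 - α))
      · have h := intervalIntegral.intervalIntegrable_rpow' (r := 1 - α) (a := 0) (b := 1)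
          (by linarith)
        rw [intervalIntegrable_iff_integrableOn_Ioc_of_le zero_le_one] at h
        exact h.const_mul _
      · intro x hx
        rw [hbd]; simp only; rw [if_pos hx.2]
      · exact measurableSet_Ioc
    have h2 : IntegrableOn bound (Set.Ioi (1:ℝ)) := by
      apply IntegrableOn.congr_fun (f := fun x => 2 * x ^ (-α-1) + M * x ^ (-α))
      · apply Integrable.add
        · exact (integrableOn_Ioi_rpow_of_lt (by linarith) one_pos).const_mul 2
        · exact (integrableOn_Ioi_rpow_of_lt (by linarith) one_pos).const_mul M
      · intro x hx
        rw [hbd]; simp only; rw [if_neg (not_le.mpr hx)]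
      · exact measurableSet_Ioi
    have h3 := h1.union h2
    rw [Set.Ioc_union_Ioi_eq_Ioi zero_le_one] at h3
    exact h3
  · -- h_bound
    intro n
    rw [ae_restrict_iff' measurableSet_Ioi]
    filter_upwards with x hx
    have hx0 : (0:ℝ) < x := hx
    rw [norm_mul, Complex.norm_real, Real.norm_eq_abs,
      _root_.abs_of_nonneg (Real.rpow_nonneg hx0.le _)]
    have hzre : 0 ≤ (zs n).re := (hzsre n).le
    rw [hbd]
    by_cases hx1 : x ≤ 1
    · simp only [if_pos hx1]
      have h1 : ‖Complex.exp (-(zs n * x)) - 1 + zs n * x‖ ≤ ‖zs n * x‖^2 :=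
        norm_exp_neg_sub_one_add_le (mulre_nonneg hzre hx0.le)
      have h2 : ‖zs n * (x:ℂ)‖^2 ≤ M^2 * x^2 := by
        rw [norm_mul, mul_pow, Complex.norm_real, Real.norm_eq_abs, _root_.sq_abs]
        apply mul_le_mul_of_nonneg_right _ (by positivity)
        apply pow_le_pow_left₀ (norm_nonneg _) (hzsnorm n)
      calc ‖Complex.exp (-(zs n * x)) - 1 + zs n * x‖ * x ^ (-α - 1)
          ≤ M^2 * x^2 * x ^ (-α - 1) := by
            apply mul_le_mul_of_nonneg_right (h1.trans h2) (Real.rpow_nonneg hx0.le _)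
        _ = M^2 * (x * (x * x ^ (-α-1))) := by ring
        _ = M^2 * x ^ (1 - α) := by
            rw [mul_rpow_self hx0, mul_rpow_self hx0, show -α - 1 + 1 + 1 = 1 - α by ring]
    · simp only [if_neg hx1]
      push_neg at hx1
      have h1 : ‖Complex.exp (-(zs n * x)) - 1 + zs n * x‖ ≤ 2 + ‖zs n * x‖ :=
        norm_exp_neg_sub_one_add_le' (mulre_nonneg hzre hx0.le)
      have h2 : ‖zs n * (x:ℂ)‖ ≤ M * x := by
        rw [norm_mul, Complex.norm_real, Real.norm_eq_abs, _root_.abs_of_nonneg hx0.le]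
        exact mul_le_mul_of_nonneg_right (hzsnorm n) hx0.le
      calc ‖Complex.exp (-(zs n * x)) - 1 + zs n * x‖ * x ^ (-α - 1)
          ≤ (2 + M * x) * x ^ (-α - 1) := by
            apply mul_le_mul_of_nonneg_right _ (Real.rpow_nonneg hx0.le _)
            exact h1.trans (by linarith)
        _ = 2 * x ^ (-α-1) + M * (x * x ^ (-α-1)) := by ring
        _ = 2 * x ^ (-α-1) + M * x ^ (-α) := by
            rw [mul_rpow_self hx0, show -α - 1 + 1 = -α by ring]
  · -- pointwise limit
    rw [ae_restrict_iff' measurableSet_Ioi]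
    filter_upwards with x hx
    have hcont : Continuous (fun z : ℂ =>
        (Complex.exp (-(z * x)) - 1 + z * x) * ((x ^ (-α - 1) : ℝ) : ℂ)) := by
      continuity
    exact (hcont.tendsto w).comp htendzs

lemma cpow_w (hα : 1 < α) (hα2 : α < 2) {t : ℝ} (ht : t ≠ 0) :
    (-(Complex.I * t)) ^ (α : ℂ)
      = ((|t| ^ α : ℝ) : ℂ) *
        (((Real.cos (Real.pi * α / 2) : ℝ) : ℂ)
          - Complex.I * (Real.sign t : ℝ) * ((Real.sin (Real.pi * α / 2) : ℝ) : ℂ)) := by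
  set w : ℂ := -(Complex.I * t) with hw
  have hwne : w ≠ 0 := by
    rw [hw]
    simp only [neg_ne_zero, mul_ne_zero_iff]
    exact ⟨Complex.I_ne_zero, by exact_mod_cast ht⟩
  have habs : ‖w‖ = |t| := by
    rw [hw, norm_neg, norm_mul, Complex.norm_I, Complex.norm_real, Real.norm_eq_abs, one_mul]
  have hwre : w.re = 0 := by simp [hw]
  have hwim : w.im = -t := by simp [hw]
  have hlog : Complex.log w = (Real.log |t| : ℂ) + (w.arg : ℂ) * Complex.I := by
    apply Complex.ext
    · simp [Complex.log_re, habs]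
    · simp [Complex.log_im]
  rw [Complex.cpow_def_of_ne_zero hwne, hlog]
  have hexp1 : Complex.exp ((α * Real.log |t| : ℝ) : ℂ) = ((|t| ^ α : ℝ) : ℂ) := by
    rw [← Complex.ofReal_exp]
    congr 1
    rw [Real.rpow_def_of_pos (abs_pos.mpr ht)]
    ring_nf
  rcases lt_or_gt_of_ne ht with h | h
  · -- t < 0, arg = π/2, sign = -1
    have harg : w.arg = Real.pi / 2 := by
      rw [Complex.arg_eq_pi_div_two_iff]
      exact ⟨hwre, by rw [hwim]; linarith⟩
    have hsign : Real.sign t = -1 := Real.sign_of_neg h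
    rw [harg, hsign]
    have hexpand : ((Real.log |t| : ℂ) + ((Real.pi / 2 : ℝ) : ℂ) * Complex.I) * (α : ℂ)
        = ((α * Real.log |t| : ℝ) : ℂ) + ((Real.pi * α / 2 : ℝ) : ℂ) * Complex.I := by
      push_cast
      ring
    rw [hexpand, Complex.exp_add, hexp1, Complex.exp_mul_I, ← Complex.ofReal_cos,
      ← Complex.ofReal_sin]
    push_cast
    ring
  · -- t > 0, arg = -(π/2), sign = 1
    have harg : w.arg = -(Real.pi / 2) := by
      rw [Complex.arg_eq_neg_pi_div_two_iff]
      exact ⟨hwre, by rw [hwim]; linarith⟩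
    have hsign : Real.sign t = 1 := Real.sign_of_pos h
    rw [harg, hsign]
    have hexpand : ((Real.log |t| : ℂ) + ((-(Real.pi / 2) : ℝ) : ℂ) * Complex.I) * (α : ℂ)
        = ((α * Real.log |t| : ℝ) : ℂ) + ((-(Real.pi * α / 2) : ℝ) : ℂ) * Complex.I := by
      push_cast
      ring
    rw [hexpand, Complex.exp_add, hexp1, Complex.exp_mul_I, ← Complex.ofReal_cos,
      ← Complex.ofReal_sin, Real.cos_neg, Real.sin_neg]
    push_cast
    ring

end


theorem stmt9 (α : ℝ) (hα : 1 < α) (hα2 : α < 2) (t : ℝ) :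
    IntegrableOn
      (fun x : ℝ => (Complex.exp (Complex.I * t * x) - 1 - Complex.I * t * x) *
        ((x ^ (-α - 1) : ℝ) : ℂ))
      (Set.Ioi (0 : ℝ)) ∧
    ∫ x in Set.Ioi (0 : ℝ),
        (Complex.exp (Complex.I * t * x) - 1 - Complex.I * t * x) * ((x ^ (-α - 1) : ℝ) : ℂ) =
      -((-Real.Gamma (-α) * Real.cos (Real.pi * α / 2) : ℝ) : ℂ) * ((|t| ^ α : ℝ) : ℂ) *
        (1 - Complex.I * Real.sign t * Real.tan (Real.pi * α / 2)) := by
  have hfun : (fun x : ℝ => (Complex.exp (Complex.I * t * x) - 1 - Complex.I * t * x) *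
        ((x ^ (-α - 1) : ℝ) : ℂ))
      = (fun x : ℝ => (Complex.exp (-(-(Complex.I * t) * x)) - 1 + -(Complex.I * t) * x) *
        ((x ^ (-α - 1) : ℝ) : ℂ)) := by
    funext x
    rw [show -(-(Complex.I * (t:ℂ)) * (x:ℂ)) = Complex.I * t * x by ring]
    ring
  constructor
  · rw [hfun]
    exact integrable_f hα hα2 (z := -(Complex.I * t)) (by simp)
  · by_cases ht : t = 0
    · subst ht
      have hz : ∀ x : ℝ, (Complex.exp (Complex.I * (0:ℝ) * x) - 1 - Complex.I * (0:ℝ) * x) *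
          ((x ^ (-α - 1) : ℝ) : ℂ) = 0 := by
        intro x
        simp
      rw [show (fun x : ℝ => (Complex.exp (Complex.I * (0:ℝ) * x) - 1 - Complex.I * (0:ℝ) * x) *
          ((x ^ (-α - 1) : ℝ) : ℂ)) = fun _ : ℝ => (0:ℂ) from funext hz]
      rw [integral_zero]
      rw [abs_zero, Real.zero_rpow (by linarith : α ≠ 0)]
      simp
    · rw [hfun, F_boundary hα hα2 ht, cpow_w hα hα2 ht]
      have hcos : Real.cos (Real.pi * α / 2) ≠ 0 := by
        have h1 : Real.pi / 2 < Real.pi * α / 2 := by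
          have := Real.pi_pos
          nlinarith
        have h2 : Real.pi * α / 2 < Real.pi + Real.pi / 2 := by
          have := Real.pi_pos
          nlinarith
        exact (Real.cos_neg_of_pi_div_two_lt_of_lt h1 h2).ne
      rw [Real.tan_eq_sin_div_cos]
      have hcosC : ((Real.cos (Real.pi * α / 2) : ℝ) : ℂ) ≠ 0 := by
        exact_mod_cast hcos
      rw [Complex.ofReal_div, Complex.ofReal_mul, Complex.ofReal_neg]
      linear_combination (((Real.Gamma (-α) : ℝ) : ℂ) * ((|t| ^ α : ℝ) : ℂ) * Complex.I *
        ((Real.sign t : ℝ) : ℂ) * ((Real.sin (Real.pi * α / 2) : ℝ) : ℂ)) *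
        (mul_inv_cancel₀ hcosC)
end

section
/- Let φ be the characteristic function of a probability measure μ on ℝ that is non-degenerate, i.e. |φ(t)| < 1 for some real t. Then: (i) if c is a real number such that |φ(c t)| ≤ |φ(t)| for all real t, then |c| ≥ 1; (ii) if c₁ > 0 and c₂ > 0 satisfy |φ(c₁ t)| = |φ(c₂ t)| for all real t, then c₁ = c₂. -/
open MeasureTheory Complex Filter

/-- The characteristic function of a measure on ℝ. -/
noncomputable def charFun' (μ : Measure ℝ) (t : ℝ) : ℂ :=
  ∫ x, Complex.exp (Complex.I * t * x) ∂μ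

lemma charFun'_continuous (μ : Measure ℝ) [IsProbabilityMeasure μ] :
    Continuous (charFun' μ) := by
  apply MeasureTheory.continuous_of_dominated (bound := fun _ => 1)
  · intro t
    exact (Continuous.aestronglyMeasurable (by continuity))
  · intro t
    filter_upwards with x
    simp [Complex.norm_exp, Complex.mul_re, Complex.mul_im]
  · exact integrable_const 1
  · filter_upwards with x
    continuity

lemma charFun'_zero (μ : Measure ℝ) [IsProbabilityMeasure μ] : charFun' μ 0 = 1 := by
  simp [charFun', measure_univ]

theorem stmt12 (μ : Measure ℝ) [IsProbabilityMeasure μ]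
    (hnd : ∃ t : ℝ, ‖charFun' μ t‖ < 1) :
    (∀ c : ℝ, (∀ t : ℝ, ‖charFun' μ (c * t)‖ ≤ ‖charFun' μ t‖) →
      1 ≤ |c|) ∧
    (∀ c₁ c₂ : ℝ, 0 < c₁ → 0 < c₂ →
      (∀ t : ℝ, ‖charFun' μ (c₁ * t)‖ = ‖charFun' μ (c₂ * t)‖) →
      c₁ = c₂) := by
  have part1 : ∀ c : ℝ,
      (∀ t : ℝ, ‖charFun' μ (c * t)‖ ≤ ‖charFun' μ t‖) → 1 ≤ |c| := by
    intro c hc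
    by_contra h
    push_neg at h
    obtain ⟨t₀, ht₀⟩ := hnd
    have hiter : ∀ n : ℕ, ‖charFun' μ (c ^ n * t₀)‖ ≤ ‖charFun' μ t₀‖ := by
      intro n
      induction n with
      | zero => simp
      | succ n ih =>
        have := hc (c ^ n * t₀)
        calc ‖charFun' μ (c ^ (n + 1) * t₀)‖
            = ‖charFun' μ (c * (c ^ n * t₀))‖ := by ring_nf
          _ ≤ ‖charFun' μ (c ^ n * t₀)‖ := hc _
          _ ≤ ‖charFun' μ t₀‖ := ih
    have htend : Tendsto (fun n : ℕ => c ^ n * t₀) atTop (nhds 0) := by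
      have := tendsto_pow_atTop_nhds_zero_of_abs_lt_one h
      simpa using this.mul_const t₀
    have habs : Tendsto (fun n : ℕ => ‖charFun' μ (c ^ n * t₀)‖) atTop
        (nhds (‖charFun' μ 0‖)) :=
      (continuous_norm.comp (charFun'_continuous μ)).continuousAt.tendsto.comp htend
    rw [charFun'_zero μ] at habs
    simp only [norm_one] at habs
    have : (1 : ℝ) ≤ ‖charFun' μ t₀‖ :=
      le_of_tendsto' habs hiter
    linarith
  refine ⟨part1, ?_⟩
  intro c₁ c₂ h₁ h₂ heq
  have key : ∀ (a b : ℝ), 0 < a → 0 < b →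
      (∀ t : ℝ, ‖charFun' μ (a * t)‖ = ‖charFun' μ (b * t)‖) →
      b ≤ a := by
    intro a b ha hb hab
    have := part1 (a / b) (fun s => by
      have := hab (s / b)
      have hb' : b ≠ 0 := ne_of_gt hb
      rw [show a * (s / b) = a / b * s by field_simp, mul_div_cancel₀ s hb'] at this
      exact le_of_eq this)
    rw [abs_of_pos (div_pos ha hb)] at this
    exact (one_le_div hb).mp this
  exact le_antisymm (key c₂ c₁ h₂ h₁ (fun t => (heq t).symm)) (key c₁ c₂ h₁ h₂ heq)
end
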